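/- (Constant hash initialization makes training identical for all arrangements of the signal.) In the differentiable setting, suppose the hash table is initialized with all keys equal: H₀ i = h₀ for every i ∈ Fin N and some fixed h₀ ∈ EuclideanSpace ℝ (Fin d). Let (θ_k, H_k) be the gradient-descent iterates for L_y starting from (θ₀, H₀), and let (θ'_k, H'_k) be the gradient-descent iterates for L_{y∘σ} starting from the same initial point (θ₀, H₀), for any permutation σ : Fin N ≃ Fin N. Then for every k ∈ ℕ: θ'_k = θ_k and H'_k = H_k∘σ; in particular, the sequence of optimized network parameters θ_k is the same for every arrangement of the signal. -/

import Mathlib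

/-! Permuting the hash table by `σ` is a linear isometry `P` of the parameter space with
`L_{y∘σ} ∘ P = L_y`. Gradients are equivariant under linear isometries, so gradient descent for
`L_{y∘σ}` started at `P x₀` is `P` applied to gradient descent for `L_y` started at `x₀`; and a
constant hash table is fixed by `P`. -/

noncomputable section

/-- The product Hilbert space `E` of network parameters and hash tables. -/
abbrev DinerParamSpace (p N d : ℕ) :=
  WithLp 2 ((EuclideanSpace ℝ (Fin p)) × (PiLp 2 fun _ : Fin N => EuclideanSpace ℝ (Fin d)))

/-- The DINER loss as a function on the product Hilbert space. -/
def dinerLossE {N p d m : ℕ}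
    (f : EuclideanSpace ℝ (Fin p) → EuclideanSpace ℝ (Fin d) → (Fin m → ℝ))
    (ℓ : (Fin m → ℝ) → (Fin m → ℝ) → ℝ)
    (y : Fin N → (Fin m → ℝ)) (x : DinerParamSpace p N d) : ℝ :=
  ∑ i : Fin N, ℓ (f x.fst (x.snd i)) (y i)

/-- Gradient-descent iterates with learning rate `η`, started at `x₀`. -/
def dinerGDIter {N p d m : ℕ}
    (f : EuclideanSpace ℝ (Fin p) → EuclideanSpace ℝ (Fin d) → (Fin m → ℝ))
    (ℓ : (Fin m → ℝ) → (Fin m → ℝ) → ℝ)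
    (y : Fin N → (Fin m → ℝ)) (η : ℝ)
    (x₀ : DinerParamSpace p N d) : ℕ → DinerParamSpace p N d
  | 0 => x₀
  | k + 1 => dinerGDIter f ℓ y η x₀ k - η • gradient (dinerLossE f ℓ y) (dinerGDIter f ℓ y η x₀ k)

theorem gradient_comp_linearIsometryEquiv {𝕜 E F : Type*} [RCLike 𝕜]
    [NormedAddCommGroup E] [InnerProductSpace 𝕜 E] [CompleteSpace E]
    [NormedAddCommGroup F] [InnerProductSpace 𝕜 F] [CompleteSpace F]
    (A : E ≃ₗᵢ[𝕜] F) (g : F → 𝕜) (x : E) :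
    gradient (g ∘ A) x = A.symm (gradient g (A x)) := by
  refine ext_inner_right 𝕜 fun v => ?_
  rw [inner_gradient_left, ← A.inner_map_map, A.apply_symm_apply, inner_gradient_left]
  exact congrArg (· v) (A.toContinuousLinearEquiv.comp_right_fderiv (f := g) (x := x))

def dinerPermIso {p N d : ℕ} (σ : Equiv.Perm (Fin N)) :
    DinerParamSpace p N d ≃ₗᵢ[ℝ] DinerParamSpace p N d :=
  LinearIsometryEquiv.withLpProdCongr 2 (LinearIsometryEquiv.refl ℝ _)
    (LinearIsometryEquiv.piLpCongrLeft 2 ℝ _ σ.symm)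

@[simp]
theorem dinerPermIso_apply {p N d : ℕ} (σ : Equiv.Perm (Fin N)) (x : DinerParamSpace p N d) :
    dinerPermIso σ x = WithLp.toLp 2 (x.fst, WithLp.toLp 2 fun i => x.snd (σ i)) :=
  rfl

theorem dinerPermIso_toLp_of_forall_apply_perm_eq {p N d : ℕ} {σ : Equiv.Perm (Fin N)}
    (θ : EuclideanSpace ℝ (Fin p)) {H : PiLp 2 fun _ : Fin N => EuclideanSpace ℝ (Fin d)}
    (hH : ∀ i, H (σ i) = H i) :
    dinerPermIso σ (WithLp.toLp 2 (θ, H) : DinerParamSpace p N d) = WithLp.toLp 2 (θ, H) := by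
  rw [dinerPermIso_apply]
  congr
  exact funext hH

section
variable {N p d m : ℕ}
    (f : EuclideanSpace ℝ (Fin p) → EuclideanSpace ℝ (Fin d) → (Fin m → ℝ))
    (ℓ : (Fin m → ℝ) → (Fin m → ℝ) → ℝ) (y : Fin N → (Fin m → ℝ)) (σ : Equiv.Perm (Fin N))

theorem dinerLossE_comp_perm_comp_dinerPermIso :
    dinerLossE f ℓ (y ∘ σ) ∘ dinerPermIso σ = dinerLossE f ℓ y := by
  ext x
  exact Fintype.sum_equiv σ _ _ fun i => rfl

theorem gradient_dinerLossE_comp_perm (x : DinerParamSpace p N d) :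
    gradient (dinerLossE f ℓ (y ∘ σ)) (dinerPermIso σ x) =
      dinerPermIso σ (gradient (dinerLossE f ℓ y) x) := by
  rw [← dinerLossE_comp_perm_comp_dinerPermIso f ℓ y σ, gradient_comp_linearIsometryEquiv,
    LinearIsometryEquiv.apply_symm_apply]

theorem dinerGDIter_comp_perm (η : ℝ) (x₀ : DinerParamSpace p N d) (k : ℕ) :
    dinerGDIter f ℓ (y ∘ σ) η (dinerPermIso σ x₀) k = dinerPermIso σ (dinerGDIter f ℓ y η x₀ k) := by
  induction k with
  | zero => rfl
  | succ k ih =>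
    rw [dinerGDIter, dinerGDIter, ih, gradient_dinerLossE_comp_perm, map_sub, map_smul]

end

theorem dinerGDIter_const_init_comp_perm_general {N p d m : ℕ}
    (f : EuclideanSpace ℝ (Fin p) → EuclideanSpace ℝ (Fin d) → (Fin m → ℝ))
    (ℓ : (Fin m → ℝ) → (Fin m → ℝ) → ℝ)
    (y : Fin N → (Fin m → ℝ)) (σ : Equiv.Perm (Fin N))
    (η : ℝ)
    (θ₀ : EuclideanSpace ℝ (Fin p))
    (H₀ : PiLp 2 fun _ : Fin N => EuclideanSpace ℝ (Fin d))
    (h₀ : EuclideanSpace ℝ (Fin d)) (hconst : ∀ i : Fin N, H₀ i = h₀) :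
    ∀ k : ℕ,
      (dinerGDIter f ℓ (y ∘ σ) η (WithLp.toLp 2 (θ₀, H₀) : DinerParamSpace p N d) k).fst =
          (dinerGDIter f ℓ y η (WithLp.toLp 2 (θ₀, H₀) : DinerParamSpace p N d) k).fst ∧
      (dinerGDIter f ℓ (y ∘ σ) η (WithLp.toLp 2 (θ₀, H₀) : DinerParamSpace p N d) k).snd =
          (fun i => (dinerGDIter f ℓ y η (WithLp.toLp 2 (θ₀, H₀) : DinerParamSpace p N d) k).snd (σ i)) := by
  intro k
  have hinit : dinerPermIso σ (WithLp.toLp 2 (θ₀, H₀) : DinerParamSpace p N d) =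
      WithLp.toLp 2 (θ₀, H₀) :=
    dinerPermIso_toLp_of_forall_apply_perm_eq θ₀ fun i => (hconst _).trans (hconst i).symm
  have key := dinerGDIter_comp_perm f ℓ y σ η (WithLp.toLp 2 (θ₀, H₀)) k
  rw [hinit] at key
  rw [key]
  exact ⟨rfl, rfl⟩

/-- Constant hash initialization makes training identical for all arrangements of
the signal: starting both trainings from the same point `(θ₀, H₀)` with all hash
keys equal to `h₀`, at every step `θ'_k = θ_k` and `H'_k = H_k ∘ σ`. -/
theorem dinerGDIter_const_init_comp_perm {N p d m : ℕ}
    (f : EuclideanSpace ℝ (Fin p) → EuclideanSpace ℝ (Fin d) → (Fin m → ℝ))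
    (ℓ : (Fin m → ℝ) → (Fin m → ℝ) → ℝ)
    (y : Fin N → (Fin m → ℝ)) (σ : Equiv.Perm (Fin N))
    (hdiff : ∀ i : Fin N,
      Differentiable ℝ (fun q : (EuclideanSpace ℝ (Fin p)) × (EuclideanSpace ℝ (Fin d)) =>
        ℓ (f q.1 q.2) (y i)))
    (hdiff' : ∀ i : Fin N,
      Differentiable ℝ (fun q : (EuclideanSpace ℝ (Fin p)) × (EuclideanSpace ℝ (Fin d)) =>
        ℓ (f q.1 q.2) ((y ∘ σ) i)))
    (η : ℝ)
    (θ₀ : EuclideanSpace ℝ (Fin p))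
    (H₀ : PiLp 2 fun _ : Fin N => EuclideanSpace ℝ (Fin d))
    (h₀ : EuclideanSpace ℝ (Fin d)) (hconst : ∀ i : Fin N, H₀ i = h₀) :
    ∀ k : ℕ,
      (dinerGDIter f ℓ (y ∘ σ) η (WithLp.toLp 2 (θ₀, H₀) : DinerParamSpace p N d) k).fst =
          (dinerGDIter f ℓ y η (WithLp.toLp 2 (θ₀, H₀) : DinerParamSpace p N d) k).fst ∧
      (dinerGDIter f ℓ (y ∘ σ) η (WithLp.toLp 2 (θ₀, H₀) : DinerParamSpace p N d) k).snd =
          (fun i => (dinerGDIter f ℓ y η (WithLp.toLp 2 (θ₀, H₀) : DinerParamSpace p N d) k).snd (σ i)) :=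
  dinerGDIter_const_init_comp_perm_general f ℓ y σ η θ₀ H₀ h₀ hconst
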